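/- Normalized Kadell integral monotonicity: for a partition μ of length at most n, indices 1 ≤ i < j ≤ n with λ = R_{ij}(μ) (λ_i = μ_i+1, λ_j = μ_j−1, λ_k = μ_k otherwise, λ still a partition), and parameters r, s, τ > 0, define Ĩ_λ(τ;r,s) = ∏_{i=1}^n ⟨(n−i)τ + r⟩_{λ_i} / ⟨(2n−i−1)τ + r + s⟩_{λ_i}. Then Ĩ_λ/Ĩ_μ − 1 = ((j−i)τ + λ_i − λ_j − 1)·((n−1)τ + s) / (((n−j)τ + λ_j + r)·((2n−i−1)τ + λ_i + r + s − 1)), and in particular Ĩ_λ ≥ Ĩ_μ for all τ, r, s > 0. -/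

import Mathlib

/-!
Writing `a_k = (n-1-k)τ + r` and `b_k = (2n-k-2)τ + r + s` for the bases of the Pochhammer
symbols at index `k`, the difference `b_k - a_k = (n-1)τ + s =: c` does not depend on `k`.
Raising `μ_i` and lowering `μ_j` changes only two factors of `Ĩ`, so
`Ĩ_λ / Ĩ_μ = A / (A + c) · (C + c) / C` with `A = a_i + μ_i`, `C = a_j + λ_j`, and this
exceeds `1` by `c (A - C) / (C (A + c))`. Since `i < j` and `μ_j ≤ μ_i`, `A - C ≥ 0`.
-/

open Finset

/-- The rising factorial (Pochhammer symbol) `⟨x⟩_k = x(x+1)⋯(x+k-1)`. -/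
noncomputable def poch (x : ℝ) (k : ℕ) : ℝ := ∏ i ∈ Finset.range k, (x + i)

/-- The normalized Kadell integral
`Ĩ_λ(τ;r,s) = ∏_{i=1}^n ⟨(n-i)τ+r⟩_{λ_i} / ⟨(2n-i-1)τ+r+s⟩_{λ_i}`
(here indexed by `k = i-1 ∈ Fin n`). -/
noncomputable def kadell {n : ℕ} (lam : Fin n → ℕ) (τ r s : ℝ) : ℝ :=
  ∏ k : Fin n,
    poch (((n : ℝ) - 1 - (k : ℕ)) * τ + r) (lam k) /
      poch ((2 * (n : ℝ) - (k : ℕ) - 2) * τ + r + s) (lam k)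

theorem div_add_mul_add_div_sub_one {K : Type*} [Field K] {A C : K} (c : K)
    (hA : A + c ≠ 0) (hC : C ≠ 0) :
    A / (A + c) * ((C + c) / C) - 1 = c * (A - C) / (C * (A + c)) := by
  field_simp
  ring

theorem prod_div_prod_eq_mul_of_eq_off_pair {ι G : Type*} [Fintype ι] [CommGroupWithZero G]
    {f g : ι → G} {i j : ι} (hij : i ≠ j) (hfg : ∀ k, k ≠ i → k ≠ j → f k = g k)
    (hg : ∀ k, g k ≠ 0) :
    (∏ k, f k) / ∏ k, g k = f i / g i * (f j / g j) := by
  rw [← prod_div_distrib]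
  refine prod_eq_mul i j hij (fun k _ hk => ?_) (by simp) (by simp)
  rw [hfg k hk.1 hk.2, div_self (hg k)]

theorem poch_pos {x : ℝ} (hx : 0 < x) (k : ℕ) : 0 < poch x k :=
  prod_pos fun i _ => by positivity

theorem poch_succ (x : ℝ) (k : ℕ) : poch x (k + 1) = poch x k * (x + k) :=
  prod_range_succ _ k

theorem poch_succ_div_poch_succ_div_poch_div_poch {a b : ℝ} {m : ℕ}
    (ha : poch a m ≠ 0) (hb : poch b m ≠ 0) :
    poch a (m + 1) / poch b (m + 1) / (poch a m / poch b m) = (a + m) / (b + m) := by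
  rw [poch_succ, poch_succ]
  field_simp

section Kadell

variable {n : ℕ} {τ r s : ℝ}

theorem kadell_lower_base_pos (hτ : 0 ≤ τ) (hr : 0 < r) (k : Fin n) :
    0 < ((n : ℝ) - 1 - (k : ℕ)) * τ + r := by
  have hk : ((k : ℕ) : ℝ) + 1 ≤ n := by exact_mod_cast k.isLt
  nlinarith

theorem kadell_upper_base_pos (hτ : 0 ≤ τ) (hr : 0 < r) (hs : 0 ≤ s) (k : Fin n) :
    0 < (2 * (n : ℝ) - (k : ℕ) - 2) * τ + r + s := by
  have hk : ((k : ℕ) : ℝ) + 1 ≤ n := by exact_mod_cast k.isLt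
  nlinarith

theorem kadell_pos (lam : Fin n → ℕ) (hτ : 0 ≤ τ) (hr : 0 < r) (hs : 0 ≤ s) :
    0 < kadell lam τ r s :=
  prod_pos fun k _ => div_pos (poch_pos (kadell_lower_base_pos hτ hr k) _)
    (poch_pos (kadell_upper_base_pos hτ hr hs k) _)

variable {μ lam : Fin n → ℕ} {i j : Fin n}

theorem kadell_div_kadell_of_raising (hij : i ≠ j) (hi : lam i = μ i + 1)
    (hj : μ j = lam j + 1) (hk : ∀ k, k ≠ i → k ≠ j → lam k = μ k)
    (hτ : 0 ≤ τ) (hr : 0 < r) (hs : 0 ≤ s) :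
    kadell lam τ r s / kadell μ τ r s =
      (((n : ℝ) - 1 - (i : ℕ)) * τ + r + μ i) /
          ((2 * (n : ℝ) - (i : ℕ) - 2) * τ + r + s + μ i) *
        (((2 * (n : ℝ) - (j : ℕ) - 2) * τ + r + s + lam j) /
          (((n : ℝ) - 1 - (j : ℕ)) * τ + r + lam j)) := by
  have hpoch : ∀ (k : Fin n) (m : ℕ), poch (((n : ℝ) - 1 - (k : ℕ)) * τ + r) m ≠ 0 ∧
      poch ((2 * (n : ℝ) - (k : ℕ) - 2) * τ + r + s) m ≠ 0 := fun k m =>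
    ⟨(poch_pos (kadell_lower_base_pos hτ hr k) m).ne',
      (poch_pos (kadell_upper_base_pos hτ hr hs k) m).ne'⟩
  rw [kadell, kadell, prod_div_prod_eq_mul_of_eq_off_pair hij
      (fun k hki hkj => by rw [hk k hki hkj])
      (fun k => div_ne_zero (hpoch k _).1 (hpoch k _).2),
    hi, hj, poch_succ_div_poch_succ_div_poch_div_poch (hpoch i _).1 (hpoch i _).2]
  congr 1
  rw [← inv_div, poch_succ_div_poch_succ_div_poch_div_poch (hpoch j _).1 (hpoch j _).2, inv_div]

theorem kadell_div_kadell_sub_one_of_raising (hij : i ≠ j) (hi : lam i = μ i + 1)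
    (hj : μ j = lam j + 1) (hk : ∀ k, k ≠ i → k ≠ j → lam k = μ k)
    (hτ : 0 ≤ τ) (hr : 0 < r) (hs : 0 ≤ s) :
    kadell lam τ r s / kadell μ τ r s - 1 =
      (((n : ℝ) - 1) * τ + s) *
          ((((n : ℝ) - 1 - (i : ℕ)) * τ + r + μ i) - (((n : ℝ) - 1 - (j : ℕ)) * τ + r + lam j)) /
        ((((n : ℝ) - 1 - (j : ℕ)) * τ + r + lam j) *
          ((((n : ℝ) - 1 - (i : ℕ)) * τ + r + μ i) + (((n : ℝ) - 1) * τ + s))) := by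
  have hshift : ∀ (k : Fin n) (m : ℕ), (2 * (n : ℝ) - (k : ℕ) - 2) * τ + r + s + m =
      (((n : ℝ) - 1 - (k : ℕ)) * τ + r + m) + (((n : ℝ) - 1) * τ + s) := fun _ _ => by ring
  rw [kadell_div_kadell_of_raising hij hi hj hk hτ hr hs, hshift, hshift]
  refine div_add_mul_add_div_sub_one _ ?_ ?_
  · rw [← hshift]
    have := kadell_upper_base_pos hτ hr hs i
    positivity
  · have := kadell_lower_base_pos hτ hr j
    positivity

end Kadell

theorem kadell_raising_monotone_general
    (n : ℕ) (μ : Fin n → ℕ) (hμ : ∀ a b : Fin n, a ≤ b → μ b ≤ μ a)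
    (i j : Fin n) (hij : i < j) (hμj : 1 ≤ μ j)
    (lam : Fin n → ℕ)
    (hlam : ∀ k : Fin n, lam k = if k = i then μ i + 1 else if k = j then μ j - 1 else μ k)
    (τ r s : ℝ) (hτ : 0 < τ) (hr : 0 < r) (hs : 0 < s) :
    kadell lam τ r s / kadell μ τ r s - 1 =
      (((j : ℕ) - (i : ℕ) : ℝ) * τ + (lam i : ℝ) - (lam j : ℝ) - 1) *
        (((n : ℝ) - 1) * τ + s) /
      ((((n : ℝ) - 1 - (j : ℕ)) * τ + (lam j : ℝ) + r) *
        ((2 * (n : ℝ) - (i : ℕ) - 2) * τ + (lam i : ℝ) + r + s - 1)) ∧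
    kadell μ τ r s ≤ kadell lam τ r s := by
  have hi : lam i = μ i + 1 := by simpa using hlam i
  have hj : μ j = lam j + 1 := by
    have := hlam j
    rw [if_neg hij.ne', if_pos rfl] at this
    omega
  have hk : ∀ k, k ≠ i → k ≠ j → lam k = μ k := fun k hki hkj => by
    rw [hlam k, if_neg hki, if_neg hkj]
  have hsub := kadell_div_kadell_sub_one_of_raising hij.ne hi hj hk hτ.le hr hs.le
  refine ⟨by rw [hsub, hi]; push_cast; congr 1 <;> ring, ?_⟩
  have hgap : ((lam j : ℕ) : ℝ) + 1 ≤ μ i := by exact_mod_cast hj ▸ hμ i j hij.le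
  have hij' : ((i : ℕ) : ℝ) + 1 ≤ (j : ℕ) := by exact_mod_cast hij
  have hlower := kadell_lower_base_pos hτ.le hr j
  have hupper := kadell_upper_base_pos hτ.le hr hs.le i
  have hn : ((j : ℕ) : ℝ) + 1 ≤ n := by exact_mod_cast j.isLt
  rw [← one_le_div (kadell_pos μ hτ.le hr hs.le), ← sub_nonneg, hsub]
  apply div_nonneg
  · apply mul_nonneg <;> nlinarith
  · apply mul_nonneg <;> nlinarith

/-- Monotonicity of the normalized Kadell integral under the raising operator:
if `λ = R_{ij}(μ)` is again a partition, then
`Ĩ_λ/Ĩ_μ - 1 = ((j-i)τ + λ_i - λ_j - 1)((n-1)τ + s) /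
(((n-j)τ + λ_j + r)((2n-i-1)τ + λ_i + r + s - 1))`, and in particular `Ĩ_μ ≤ Ĩ_λ`. -/
theorem kadell_raising_monotone
    (n : ℕ) (μ : Fin n → ℕ) (hμ : ∀ a b : Fin n, a ≤ b → μ b ≤ μ a)
    (i j : Fin n) (hij : i < j) (hμj : 1 ≤ μ j)
    (lam : Fin n → ℕ)
    (hlam : ∀ k : Fin n, lam k = if k = i then μ i + 1 else if k = j then μ j - 1 else μ k)
    (hpart : ∀ a b : Fin n, a ≤ b → lam b ≤ lam a)
    (τ r s : ℝ) (hτ : 0 < τ) (hr : 0 < r) (hs : 0 < s) :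
    kadell lam τ r s / kadell μ τ r s - 1 =
      (((j : ℕ) - (i : ℕ) : ℝ) * τ + (lam i : ℝ) - (lam j : ℝ) - 1) *
        (((n : ℝ) - 1) * τ + s) /
      ((((n : ℝ) - 1 - (j : ℕ)) * τ + (lam j : ℝ) + r) *
        ((2 * (n : ℝ) - (i : ℕ) - 2) * τ + (lam i : ℝ) + r + s - 1)) ∧
    kadell μ τ r s ≤ kadell lam τ r s :=
  kadell_raising_monotone_general n μ hμ i j hij hμj lam hlam τ r s hτ hr hs
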